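/- arXiv:2210.01294 — 2 statements merged into one kernel-verified Lean document; each statement's English description precedes it below -/
import Mathlib

section
/- If the agent trajectory s is 1-Lipschitz and the target trajectory θ is 1-Lipschitz with s(t₁) < θ(t₁) (resp. s(t₁) > θ(t₁)), then the modified trajectory s'(t) = s(t₁) + (t - t₁) (resp. s(t₁) - (t - t₁)) satisfies |θ(t) - s'(t)| ≤ |θ(t) - s(t)| for all t ∈ [t₁, t̃₁], where t̃₁ = inf{t > t₁ : s(t₁) + γ(t - t₁) = θ(t)} with γ = sgn(θ(t₁) - s(t₁)). -/
theorem stmt_6 (t₁ t₂ : ℝ) (h12 : t₁ ≤ t₂) (s θ : ℝ → ℝ)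
    (hs : LipschitzOnWith 1 s (Set.Icc t₁ t₂))
    (hθ : LipschitzOnWith 1 θ (Set.Icc t₁ t₂))
    (hne : s t₁ ≠ θ t₁) :
    ∀ t ∈ Set.Icc t₁ t₂,
      (∀ τ ∈ Set.Icc t₁ t₂, t₁ < τ →
        s t₁ + Real.sign (θ t₁ - s t₁) * (τ - t₁) = θ τ → t ≤ τ) →
      |θ t - (s t₁ + Real.sign (θ t₁ - s t₁) * (t - t₁))| ≤ |θ t - s t| := by
  intro t ht hmin
  have ht1 : t₁ ∈ Set.Icc t₁ t₂ := ⟨le_refl _, h12⟩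
  have hsdist : |s t - s t₁| ≤ |t - t₁| := by
    have := hs.dist_le_mul t ht t₁ ht1
    simpa [Real.dist_eq] using this
  have habs : |t - t₁| = t - t₁ := abs_of_nonneg (by linarith [ht.1])
  have hcont : ContinuousOn (fun τ => θ τ - (s t₁ + Real.sign (θ t₁ - s t₁) * (τ - t₁)))
      (Set.Icc t₁ t) := by
    apply ContinuousOn.sub
    · exact hθ.continuousOn.mono (Set.Icc_subset_Icc_right ht.2)
    · fun_prop
  rcases lt_or_gt_of_ne hne with hlt | hgt
  · have hsign : Real.sign (θ t₁ - s t₁) = 1 := Real.sign_of_pos (by linarith)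
    rw [hsign] at hmin ⊢
    rw [hsign] at hcont
    have hB : s t₁ + 1 * (t - t₁) ≤ θ t := by
      by_contra hcon
      push_neg at hcon
      have h0mem : (0:ℝ) ∈ Set.Icc (θ t - (s t₁ + 1 * (t - t₁))) (θ t₁ - (s t₁ + 1 * (t₁ - t₁))) := by
        constructor <;> simp <;> linarith
      obtain ⟨τ, hτmem, hτeq⟩ := intermediate_value_Icc' ht.1 hcont h0mem
      simp only at hτeq
      have hτ2 : τ ∈ Set.Icc t₁ t₂ := ⟨hτmem.1, le_trans hτmem.2 ht.2⟩
      have hτgt : t₁ < τ := by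
        rcases lt_or_eq_of_le hτmem.1 with h | h
        · exact h
        · exfalso; rw [← h] at hτeq; simp at hτeq; linarith
      have := hmin τ hτ2 hτgt (by linarith [hτeq])
      have hτt : τ = t := le_antisymm hτmem.2 this
      rw [hτt] at hτeq
      simp at hτeq; linarith
    have hA : s t ≤ s t₁ + (t - t₁) := by
      have := (abs_le.mp hsdist).2; rw [habs] at this; linarith
    rw [abs_of_nonneg (by linarith), abs_of_nonneg (by linarith)]
    linarith
  · have hsign : Real.sign (θ t₁ - s t₁) = -1 := Real.sign_of_neg (by linarith)
    rw [hsign] at hmin ⊢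
    rw [hsign] at hcont
    have hB : θ t ≤ s t₁ + (-1) * (t - t₁) := by
      by_contra hcon
      push_neg at hcon
      have h0mem : (0:ℝ) ∈ Set.Icc (θ t₁ - (s t₁ + (-1) * (t₁ - t₁))) (θ t - (s t₁ + (-1) * (t - t₁))) := by
        constructor <;> simp <;> linarith
      obtain ⟨τ, hτmem, hτeq⟩ := intermediate_value_Icc ht.1 hcont h0mem
      simp only at hτeq
      have hτ2 : τ ∈ Set.Icc t₁ t₂ := ⟨hτmem.1, le_trans hτmem.2 ht.2⟩
      have hτgt : t₁ < τ := by
        rcases lt_or_eq_of_le hτmem.1 with h | h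
        · exact h
        · exfalso; rw [← h] at hτeq; simp at hτeq; linarith
      have := hmin τ hτ2 hτgt (by linarith [hτeq])
      have hτt : τ = t := le_antisymm hτmem.2 this
      rw [hτt] at hτeq
      simp at hτeq; linarith
    have hA : s t₁ - (t - t₁) ≤ s t := by
      have := (abs_le.mp hsdist).1; rw [habs] at this; linarith
    rw [abs_of_nonpos (by linarith), abs_of_nonpos (by linarith)]
    linarith
end

section
/- Suppose targets i₁ ≠ i₂ satisfy |θ_{i₁}(t) - θ_{i₂}(t)| ≥ 2r + Δ for all t, with Δ > 0, and the target trajectories and the agent trajectory are 1-Lipschitz. Then the number of switches in the sequence of targets sensed by the agent (i.e., maximal intervals during which a given target i with |θ_i(t) - s(t)| < r is sensed) over [0,T] is at most ⌈2T/Δ⌉ + 1. -/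
/-!
If the agent senses target `f` at time `a` and target `g` at time `b`, then going from `f a` via
the agent to `g b` and back along `g` to `g a` covers the separation `2r + Δ` with two sensing
gaps below `r` and two 1-Lipschitz legs of length at most `|b - a|`; hence consecutive switches are
more than `Δ / 2` apart, and `k` switches inside `[0, T]` force `k * Δ / 2 ≤ T`.
-/

theorem Fin.add_nsmul_le_of_forall_add_le {α : Type*} [AddCommMonoid α] [PartialOrder α]
    [IsOrderedAddMonoid α] {k : ℕ} {t : Fin (k + 1) → α} {δ : α}
    (h : ∀ ℓ : Fin k, t ℓ.castSucc + δ ≤ t ℓ.succ) (m : Fin (k + 1)) :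
    t 0 + (m : ℕ) • δ ≤ t m := by
  induction m using Fin.induction with
  | zero => simp
  | succ ℓ ih =>
    calc t 0 + ((ℓ : ℕ) + 1) • δ = (t 0 + (ℓ : ℕ) • δ) + δ := by rw [succ_nsmul, add_assoc]
      _ ≤ t ℓ.castSucc + δ := by gcongr; exact ih
      _ ≤ t ℓ.succ := h ℓ

theorem half_lt_dist_of_sensed_separated {α : Type*} [PseudoMetricSpace α] {f g s : ℝ → α}
    {S : Set ℝ} {r Δ a b : ℝ} (hg : LipschitzOnWith 1 g S) (hs : LipschitzOnWith 1 s S)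
    (ha : a ∈ S) (hb : b ∈ S) (hfa : dist (f a) (s a) < r) (hgb : dist (g b) (s b) < r)
    (hsep : 2 * r + Δ ≤ dist (f a) (g a)) : Δ / 2 < dist a b := by
  have hsab : dist (s a) (s b) ≤ dist a b := by simpa using hs.dist_le_mul a ha b hb
  have hgab : dist (g b) (g a) ≤ dist a b := by
    simpa [dist_comm a] using hg.dist_le_mul b hb a ha
  have hclose : dist (f a) (g a) < 2 * r + 2 * dist a b := calc
    dist (f a) (g a)
        ≤ dist (f a) (s a) + dist (s a) (s b) + dist (s b) (g b) + dist (g b) (g a) := by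
          linarith [dist_triangle4 (f a) (s a) (s b) (g a), dist_triangle (s b) (g b) (g a)]
    _ < 2 * r + 2 * dist a b := by rw [dist_comm (s b)]; linarith
  linarith

theorem stmt_8_general (T r Δ : ℝ) (hΔ : 0 < Δ)
    (M : ℕ) (θ : Fin M → ℝ → ℝ) (s : ℝ → ℝ)
    (hθ : ∀ i, LipschitzOnWith 1 (θ i) (Set.Icc 0 T))
    (hs : LipschitzOnWith 1 s (Set.Icc 0 T))
    (hsep : ∀ i₁ i₂ : Fin M, i₁ ≠ i₂ → ∀ t ∈ Set.Icc 0 T,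
      2 * r + Δ ≤ |θ i₁ t - θ i₂ t|)
    (k : ℕ) (t : Fin (k + 1) → ℝ) (ht : ∀ ℓ, t ℓ ∈ Set.Icc 0 T)
    (hmono : StrictMono t) (i : Fin (k + 1) → Fin M)
    (hsense : ∀ ℓ, |θ (i ℓ) (t ℓ) - s (t ℓ)| < r)
    (hswitch : ∀ ℓ : Fin k, i ℓ.castSucc ≠ i ℓ.succ) :
    k + 1 ≤ ⌈2 * T / Δ⌉₊ + 1 := by
  have hgap (ℓ : Fin k) : t ℓ.castSucc + Δ / 2 ≤ t ℓ.succ := by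
    have hlt : t ℓ.castSucc < t ℓ.succ := hmono Fin.castSucc_lt_succ
    have := half_lt_dist_of_sensed_separated (hθ _) hs (ht ℓ.castSucc) (ht ℓ.succ)
      (hsense _) (hsense _) (hsep _ _ (hswitch ℓ) _ (ht ℓ.castSucc))
    rw [Real.dist_eq, abs_sub_comm, abs_of_pos (sub_pos.2 hlt)] at this
    linarith
  have hspan := Fin.add_nsmul_le_of_forall_add_le hgap (Fin.last k)
  rw [Fin.val_last, nsmul_eq_mul] at hspan
  have hk : (k : ℝ) ≤ 2 * T / Δ := by
    rw [le_div_iff₀ hΔ]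
    linarith [(ht 0).1, (ht (Fin.last k)).2]
  have := Nat.cast_le.1 (hk.trans (Nat.le_ceil _))
  omega

theorem stmt_8 (T r Δ : ℝ) (hT : 0 < T) (hr : 0 < r) (hΔ : 0 < Δ)
    (M : ℕ) (θ : Fin M → ℝ → ℝ) (s : ℝ → ℝ)
    (hθ : ∀ i, LipschitzOnWith 1 (θ i) (Set.Icc 0 T))
    (hs : LipschitzOnWith 1 s (Set.Icc 0 T))
    (hsep : ∀ i₁ i₂ : Fin M, i₁ ≠ i₂ → ∀ t ∈ Set.Icc 0 T,
      2 * r + Δ ≤ |θ i₁ t - θ i₂ t|)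
    (k : ℕ) (t : Fin (k + 1) → ℝ) (ht : ∀ ℓ, t ℓ ∈ Set.Icc 0 T)
    (hmono : StrictMono t) (i : Fin (k + 1) → Fin M)
    (hsense : ∀ ℓ, |θ (i ℓ) (t ℓ) - s (t ℓ)| < r)
    (hswitch : ∀ ℓ : Fin k, i ℓ.castSucc ≠ i ℓ.succ) :
    k + 1 ≤ ⌈2 * T / Δ⌉₊ + 1 :=
  stmt_8_general T r Δ hΔ M θ s hθ hs hsep k t ht hmono i hsense hswitch
end
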